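/- Let k be a field, V a nonzero k-vector space and M a k-vector space. If the pair (F, Φ) satisfies the modified pentagon equation, then Φ satisfies the pentagon equation: Φ_{12} ∘ Φ_{13} ∘ Φ_{23} = Φ_{23} ∘ Φ_{12} as maps M ⊗ M ⊗ M → M ⊗ M ⊗ M. -/

import Mathlib

/-!
Compose both sides of the pentagon equation for `Φ` on the last three legs of `V ⊗ M ⊗ M ⊗ M`,
`Φ₂₃ Φ₂₄ Φ₃₄` and `Φ₃₄ Φ₂₃`, with `F₁₂ F₁₃ F₁₄`. The modified pentagon equation on the legs
`123`, `124`, `134`, `234`, together with the commutation of operators on disjoint legs, turns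
both composites into `F₃₄ F₂₃ F₁₂`. Since `F` is injective, `id_V ⊗ (Φ₁₂ Φ₁₃ Φ₂₃)` and
`id_V ⊗ (Φ₂₃ Φ₁₂)` agree; as a nonzero vector space `V` is faithfully flat, `id_V ⊗ -` is
injective.
-/

open TensorProduct

noncomputable section

variable {k : Type*} [Field k]

/-- Apply `G` to tensor factors 1 and 2 of a triple tensor product. -/
def m12 {A B C P Q : Type*}
    [AddCommGroup A] [AddCommGroup B] [AddCommGroup C] [AddCommGroup P] [AddCommGroup Q]
    [Module k A] [Module k B] [Module k C] [Module k P] [Module k Q]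
    (G : A ⊗[k] B →ₗ[k] P ⊗[k] Q) :
    A ⊗[k] (B ⊗[k] C) →ₗ[k] P ⊗[k] (Q ⊗[k] C) :=
  (TensorProduct.assoc k P Q C).toLinearMap ∘ₗ G.rTensor C ∘ₗ
    (TensorProduct.assoc k A B C).symm.toLinearMap

/-- Apply `G` to tensor factors 2 and 3 of a triple tensor product. -/
def m23 {A B C Q R : Type*}
    [AddCommGroup A] [AddCommGroup B] [AddCommGroup C] [AddCommGroup Q] [AddCommGroup R]
    [Module k A] [Module k B] [Module k C] [Module k Q] [Module k R]
    (G : B ⊗[k] C →ₗ[k] Q ⊗[k] R) :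
    A ⊗[k] (B ⊗[k] C) →ₗ[k] A ⊗[k] (Q ⊗[k] R) :=
  G.lTensor A

/-- Apply `G` to tensor factors 1 and 3 of a triple tensor product. -/
def m13 {A B C P R : Type*}
    [AddCommGroup A] [AddCommGroup B] [AddCommGroup C] [AddCommGroup P] [AddCommGroup R]
    [Module k A] [Module k B] [Module k C] [Module k P] [Module k R]
    (G : A ⊗[k] C →ₗ[k] P ⊗[k] R) :
    A ⊗[k] (B ⊗[k] C) →ₗ[k] P ⊗[k] (B ⊗[k] R) :=
  ((TensorProduct.comm k R B).toLinearMap.lTensor P) ∘ₗ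
    (TensorProduct.assoc k P R B).toLinearMap ∘ₗ G.rTensor B ∘ₗ
    (TensorProduct.assoc k A C B).symm.toLinearMap ∘ₗ
    ((TensorProduct.comm k B C).toLinearMap.lTensor A)

/-- The modified pentagon equation for a pair `(F, Φ)`:
`F₁₂ ∘ F₁₃ ∘ Φ₂₃ = F₂₃ ∘ F₁₂` as maps `V ⊗ M ⊗ M → V ⊗ V ⊗ V`. -/
def MPE {V M : Type*} [AddCommGroup V] [AddCommGroup M] [Module k V] [Module k M]
    (F : V ⊗[k] M →ₗ[k] V ⊗[k] V) (Φ : M ⊗[k] M →ₗ[k] M ⊗[k] M) : Prop :=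
  m12 F ∘ₗ m13 F ∘ₗ m23 Φ = m23 F ∘ₗ m12 F

/-- The pentagon equation: `Φ₁₂ ∘ Φ₁₃ ∘ Φ₂₃ = Φ₂₃ ∘ Φ₁₂` on `M ⊗ M ⊗ M`. -/
def PE {M : Type*} [AddCommGroup M] [Module k M]
    (Φ : M ⊗[k] M →ₗ[k] M ⊗[k] M) : Prop :=
  m12 Φ ∘ₗ m13 Φ ∘ₗ m23 Φ = m23 Φ ∘ₗ m12 Φ

section Legs

variable {A B C D P Q R S : Type*}
  [AddCommGroup A] [AddCommGroup B] [AddCommGroup C] [AddCommGroup D]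
  [AddCommGroup P] [AddCommGroup Q] [AddCommGroup R] [AddCommGroup S]
  [Module k A] [Module k B] [Module k C] [Module k D]
  [Module k P] [Module k Q] [Module k R] [Module k S]

@[simp] lemma m12_tmul (G : A ⊗[k] B →ₗ[k] P ⊗[k] Q) (a : A) (b : B) (c : C) :
    m12 G (a ⊗ₜ (b ⊗ₜ c)) = TensorProduct.assoc k P Q C (G (a ⊗ₜ b) ⊗ₜ c) := by
  simp [m12]

@[simp] lemma m13_tmul (G : A ⊗[k] C →ₗ[k] P ⊗[k] R) (a : A) (b : B) (c : C) :
    m13 G (a ⊗ₜ (b ⊗ₜ c)) =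
      (TensorProduct.comm k R B).toLinearMap.lTensor P
        (TensorProduct.assoc k P R B (G (a ⊗ₜ c) ⊗ₜ b)) := by
  simp [m13]

@[simp] lemma m23_tmul (G : B ⊗[k] C →ₗ[k] Q ⊗[k] R) (a : A) (x : B ⊗[k] C) :
    m23 G (a ⊗ₜ x) = a ⊗ₜ G x := rfl

lemma m23_comp {Y : Type*} [AddCommGroup Y] [Module k Y]
    (G : B ⊗[k] C →ₗ[k] Q ⊗[k] R) (G' : Q ⊗[k] R →ₗ[k] S ⊗[k] Y) :
    m23 (A := A) (G' ∘ₗ G) = m23 G' ∘ₗ m23 G :=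
  LinearMap.lTensor_comp _ _ _

lemma m23_inj [Module.FaithfullyFlat k A] {G G' : B ⊗[k] C →ₗ[k] Q ⊗[k] R} :
    m23 (A := A) G = m23 G' ↔ G = G' := by
  rw [← sub_eq_zero, m23, m23, ← LinearMap.lTensor_sub,
    ← Module.FaithfullyFlat.zero_iff_lTensor_zero, sub_eq_zero]

lemma m13_comp {Y Z : Type*} [AddCommGroup Y] [AddCommGroup Z] [Module k Y] [Module k Z]
    (G : A ⊗[k] C →ₗ[k] P ⊗[k] R) (G' : P ⊗[k] R →ₗ[k] Y ⊗[k] Z) :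
    m13 (B := B) (G' ∘ₗ G) = m13 G' ∘ₗ m13 G := by
  ext a b c
  simp only [AlgebraTensorModule.curry_apply, LinearMap.restrictScalars_self, curry_apply,
    LinearMap.comp_apply, m13_tmul]
  induction G (a ⊗ₜ c) using TensorProduct.induction_on <;> simp_all [add_tmul]

lemma m12_injective {G : A ⊗[k] B →ₗ[k] P ⊗[k] Q} (hG : Function.Injective G) :
    Function.Injective (m12 (C := C) G) :=
  (TensorProduct.assoc k P Q C).injective.comp
    ((Module.Flat.rTensor_preserves_injective_linearMap _ hG).comp
      (TensorProduct.assoc k A B C).symm.injective)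

lemma m13_injective {G : A ⊗[k] C →ₗ[k] P ⊗[k] R} (hG : Function.Injective G) :
    Function.Injective (m13 (B := B) G) :=
  (Module.Flat.lTensor_preserves_injective_linearMap _ (TensorProduct.comm k R B).injective).comp <|
    (TensorProduct.assoc k P R B).injective.comp <|
    (Module.Flat.rTensor_preserves_injective_linearMap _ hG).comp <|
    (TensorProduct.assoc k A C B).symm.injective.comp <|
    Module.Flat.lTensor_preserves_injective_linearMap _ (TensorProduct.comm k B C).injective

lemma m13_m23 (G : C ⊗[k] D →ₗ[k] R ⊗[k] S) :
    m13 (B := B) (m23 (A := A) G) = m23 (m23 G) := by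
  ext a b c d
  simp

lemma m12_comp_m23_m23 (G : A ⊗[k] B →ₗ[k] P ⊗[k] Q) (H : C ⊗[k] D →ₗ[k] R ⊗[k] S) :
    m12 G ∘ₗ m23 (m23 H) = m23 (m23 H) ∘ₗ m12 G := by
  ext a b c d
  simp only [AlgebraTensorModule.curry_apply, LinearMap.restrictScalars_self, curry_apply,
    LinearMap.coe_comp, Function.comp_apply, m23_tmul, m12_tmul]
  induction G (a ⊗ₜ b) using TensorProduct.induction_on <;> simp_all [add_tmul]

/- On `A ⊗ (B ⊗ (C ⊗ D))`, `G` acting on the legs `12, 13, 14, 23, 24, 34` is `m12 G`,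
`m13 (m12 G)`, `m13 (m13 G)`, `m23 (m12 G)`, `m23 (m13 G)`, `m23 (m23 G)`. The reassociations
below split off the fourth leg, the third leg, or the pair `23` from the pair `14`, turning these
into `rTensor` or `lTensor` of operators on fewer legs. -/

def assocFourth : (A ⊗[k] (B ⊗[k] C)) ⊗[k] D ≃ₗ[k] A ⊗[k] (B ⊗[k] (C ⊗[k] D)) :=
  TensorProduct.assoc k A (B ⊗[k] C) D ≪≫ₗ LinearEquiv.lTensor A (TensorProduct.assoc k B C D)

def assocThird : (A ⊗[k] (B ⊗[k] D)) ⊗[k] C ≃ₗ[k] A ⊗[k] (B ⊗[k] (C ⊗[k] D)) :=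
  assocFourth ≪≫ₗ LinearEquiv.lTensor A (LinearEquiv.lTensor B (TensorProduct.comm k D C))

@[simp] lemma assocFourth_tmul (a : A) (b : B) (c : C) (d : D) :
    assocFourth (k := k) ((a ⊗ₜ (b ⊗ₜ c)) ⊗ₜ d) = a ⊗ₜ (b ⊗ₜ (c ⊗ₜ d)) := rfl

@[simp] lemma assocThird_tmul (a : A) (b : B) (c : C) (d : D) :
    assocThird (k := k) ((a ⊗ₜ (b ⊗ₜ d)) ⊗ₜ c) = a ⊗ₜ (b ⊗ₜ (c ⊗ₜ d)) := rfl

@[simp] lemma assocFourth_symm_tmul (a : A) (b : B) (c : C) (d : D) :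
    assocFourth.symm (a ⊗ₜ[k] (b ⊗ₜ[k] (c ⊗ₜ[k] d))) = (a ⊗ₜ (b ⊗ₜ c)) ⊗ₜ d :=
  (LinearEquiv.symm_apply_eq _).2 rfl

@[simp] lemma assocThird_symm_tmul (a : A) (b : B) (c : C) (d : D) :
    assocThird.symm (a ⊗ₜ[k] (b ⊗ₜ[k] (c ⊗ₜ[k] d))) = (a ⊗ₜ (b ⊗ₜ d)) ⊗ₜ c :=
  (LinearEquiv.symm_apply_eq _).2 rfl

lemma m12_eq_arrowCongr_assocFourth (G : A ⊗[k] B →ₗ[k] P ⊗[k] Q) :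
    m12 (C := C ⊗[k] D) G =
      LinearEquiv.arrowCongr assocFourth assocFourth ((m12 (C := C) G).rTensor D) := by
  ext a b c d
  simp only [AlgebraTensorModule.curry_apply, LinearMap.restrictScalars_self, curry_apply,
    LinearEquiv.arrowCongr_apply, assocFourth_symm_tmul, LinearMap.rTensor_tmul, m12_tmul]
  induction G (a ⊗ₜ b) using TensorProduct.induction_on <;> simp_all [add_tmul]

lemma m13_m12_eq_arrowCongr_assocFourth (G : A ⊗[k] C →ₗ[k] P ⊗[k] R) :
    m13 (B := B) (m12 (C := D) G) =
      LinearEquiv.arrowCongr assocFourth assocFourth ((m13 (B := B) G).rTensor D) := by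
  ext a b c d
  simp only [AlgebraTensorModule.curry_apply, LinearMap.restrictScalars_self, curry_apply,
    LinearEquiv.arrowCongr_apply, assocFourth_symm_tmul, LinearMap.rTensor_tmul, m13_tmul, m12_tmul]
  induction G (a ⊗ₜ c) using TensorProduct.induction_on <;> simp_all [add_tmul]

lemma m23_m12_eq_arrowCongr_assocFourth (G : B ⊗[k] C →ₗ[k] Q ⊗[k] R) :
    m23 (A := A) (m12 (C := D) G) =
      LinearEquiv.arrowCongr assocFourth assocFourth ((m23 (A := A) G).rTensor D) := by
  ext a b c d
  simp only [AlgebraTensorModule.curry_apply, LinearMap.restrictScalars_self, curry_apply,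
    LinearEquiv.arrowCongr_apply, assocFourth_symm_tmul, LinearMap.rTensor_tmul, m23_tmul, m12_tmul]
  induction G (b ⊗ₜ c) using TensorProduct.induction_on <;> simp_all [add_tmul, tmul_add]

lemma m12_eq_arrowCongr_assocThird (G : A ⊗[k] B →ₗ[k] P ⊗[k] Q) :
    m12 (C := C ⊗[k] D) G =
      LinearEquiv.arrowCongr assocThird assocThird ((m12 (C := D) G).rTensor C) := by
  ext a b c d
  simp only [AlgebraTensorModule.curry_apply, LinearMap.restrictScalars_self, curry_apply,
    LinearEquiv.arrowCongr_apply, assocThird_symm_tmul, LinearMap.rTensor_tmul, m12_tmul]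
  induction G (a ⊗ₜ b) using TensorProduct.induction_on <;> simp_all [add_tmul]

lemma m13_m13_eq_arrowCongr_assocThird (G : A ⊗[k] D →ₗ[k] P ⊗[k] S) :
    m13 (B := B) (m13 (B := C) G) =
      LinearEquiv.arrowCongr assocThird assocThird ((m13 (B := B) G).rTensor C) := by
  ext a b c d
  simp only [AlgebraTensorModule.curry_apply, LinearMap.restrictScalars_self, curry_apply,
    LinearEquiv.arrowCongr_apply, assocThird_symm_tmul, LinearMap.rTensor_tmul, m13_tmul]
  induction G (a ⊗ₜ d) using TensorProduct.induction_on <;> simp_all [add_tmul]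

lemma m23_m13_eq_arrowCongr_assocThird (G : B ⊗[k] D →ₗ[k] Q ⊗[k] S) :
    m23 (A := A) (m13 (B := C) G) =
      LinearEquiv.arrowCongr assocThird assocThird ((m23 (A := A) G).rTensor C) := by
  ext a b c d
  simp only [AlgebraTensorModule.curry_apply, LinearMap.restrictScalars_self, curry_apply,
    LinearEquiv.arrowCongr_apply, assocThird_symm_tmul, LinearMap.rTensor_tmul, m23_tmul, m13_tmul]
  induction G (b ⊗ₜ d) using TensorProduct.induction_on <;> simp_all [add_tmul, tmul_add]

def assocOuterInner : (A ⊗[k] D) ⊗[k] (B ⊗[k] C) ≃ₗ[k] A ⊗[k] (B ⊗[k] (C ⊗[k] D)) :=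
  TensorProduct.assoc k A D (B ⊗[k] C) ≪≫ₗ
    LinearEquiv.lTensor A (TensorProduct.comm k D (B ⊗[k] C) ≪≫ₗ TensorProduct.assoc k B C D)

@[simp] lemma assocOuterInner_tmul (a : A) (b : B) (c : C) (d : D) :
    assocOuterInner (k := k) ((a ⊗ₜ d) ⊗ₜ (b ⊗ₜ c)) = a ⊗ₜ (b ⊗ₜ (c ⊗ₜ d)) := rfl

@[simp] lemma assocOuterInner_symm_tmul (a : A) (b : B) (c : C) (d : D) :
    assocOuterInner.symm (a ⊗ₜ[k] (b ⊗ₜ[k] (c ⊗ₜ[k] d))) = (a ⊗ₜ d) ⊗ₜ (b ⊗ₜ c) :=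
  (LinearEquiv.symm_apply_eq _).2 rfl

lemma m13_m13_eq_arrowCongr_assocOuterInner (G : A ⊗[k] D →ₗ[k] P ⊗[k] S) :
    m13 (B := B) (m13 (B := C) G) =
      LinearEquiv.arrowCongr assocOuterInner assocOuterInner (G.rTensor (B ⊗[k] C)) := by
  ext a b c d
  simp only [AlgebraTensorModule.curry_apply, LinearMap.restrictScalars_self, curry_apply,
    LinearEquiv.arrowCongr_apply, assocOuterInner_symm_tmul, LinearMap.rTensor_tmul, m13_tmul]
  induction G (a ⊗ₜ d) using TensorProduct.induction_on <;> simp_all [add_tmul]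

lemma m23_m12_eq_arrowCongr_assocOuterInner (G : B ⊗[k] C →ₗ[k] Q ⊗[k] R) :
    m23 (A := A) (m12 (C := D) G) =
      LinearEquiv.arrowCongr assocOuterInner assocOuterInner (G.lTensor (A ⊗[k] D)) := by
  ext a b c d
  simp only [AlgebraTensorModule.curry_apply, LinearMap.restrictScalars_self, curry_apply,
    LinearEquiv.arrowCongr_apply, assocOuterInner_symm_tmul, LinearMap.lTensor_tmul, m23_tmul,
    m12_tmul]
  induction G (b ⊗ₜ c) using TensorProduct.induction_on <;> simp_all [add_tmul, tmul_add]

lemma m13_m13_comp_m23_m12 (G : A ⊗[k] D →ₗ[k] P ⊗[k] S) (H : B ⊗[k] C →ₗ[k] Q ⊗[k] R) :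
    m13 (m13 G) ∘ₗ m23 (m12 H) = m23 (m12 H) ∘ₗ m13 (m13 G) := by
  rw [m13_m13_eq_arrowCongr_assocOuterInner, m13_m13_eq_arrowCongr_assocOuterInner,
    m23_m12_eq_arrowCongr_assocOuterInner, m23_m12_eq_arrowCongr_assocOuterInner,
    ← LinearEquiv.arrowCongr_comp, ← LinearEquiv.arrowCongr_comp,
    LinearMap.rTensor_comp_lTensor, LinearMap.lTensor_comp_rTensor]

end Legs

namespace MPE

variable {V M : Type*} [AddCommGroup V] [AddCommGroup M] [Module k V] [Module k M]
  {f : V ⊗[k] M →ₗ[k] V ⊗[k] V} {φ : M ⊗[k] M →ₗ[k] M ⊗[k] M}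

lemma legs123 {D : Type*} [AddCommGroup D] [Module k D] (h : MPE f φ) :
    m12 f ∘ₗ m13 (m12 (C := D) f) ∘ₗ m23 (m12 φ) = m23 (m12 f) ∘ₗ m12 f := by
  simp only [m12_eq_arrowCongr_assocFourth, m13_m12_eq_arrowCongr_assocFourth,
    m23_m12_eq_arrowCongr_assocFourth, ← LinearEquiv.arrowCongr_comp, ← LinearMap.rTensor_comp]
  rw [h]

lemma legs124 {C : Type*} [AddCommGroup C] [Module k C] (h : MPE f φ) :
    m12 f ∘ₗ m13 (m13 (B := C) f) ∘ₗ m23 (m13 φ) = m23 (m13 f) ∘ₗ m12 f := by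
  simp only [m12_eq_arrowCongr_assocThird, m13_m13_eq_arrowCongr_assocThird,
    m23_m13_eq_arrowCongr_assocThird, ← LinearEquiv.arrowCongr_comp, ← LinearMap.rTensor_comp]
  rw [h]

lemma legs134 {B : Type*} [AddCommGroup B] [Module k B] (h : MPE f φ) :
    m13 (B := B) (m12 f) ∘ₗ m13 (m13 f) ∘ₗ m23 (m23 φ) = m23 (m23 f) ∘ₗ m13 (m12 f) := by
  simpa only [m13_comp, m13_m23] using congrArg (m13 (B := B)) h

lemma legs234 {A : Type*} [AddCommGroup A] [Module k A] (h : MPE f φ) :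
    m23 (A := A) (m12 f) ∘ₗ m23 (m13 f) ∘ₗ m23 (m23 φ) = m23 (m23 f) ∘ₗ m23 (m12 f) := by
  simpa only [m23_comp] using congrArg (m23 (A := A)) h

lemma pentagon_legs234 (h : MPE f φ) (hf : Function.Injective f) :
    m23 (A := V) (m12 φ) ∘ₗ m23 (m13 φ) ∘ₗ m23 (m23 φ) = m23 (m23 φ) ∘ₗ m23 (m12 φ) := by
  have h123V := h.legs123 (D := V)
  have h123M := h.legs123 (D := M)
  have h124 := h.legs124 (C := M)
  have h134 := h.legs134 (B := M)
  have h234 := h.legs234 (A := V)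
  have h14_23 := m13_m13_comp_m23_m12 (B := M) (C := M) f φ
  have h12_34φ := m12_comp_m23_m23 f φ
  have h12_34f := m12_comp_m23_m23 f f
  simp only [LinearMap.ext_iff, LinearMap.comp_apply] at *
  intro x
  apply m13_injective (m13_injective hf)
  apply m13_injective (m12_injective hf)
  apply m12_injective hf
  calc m12 f (m13 (m12 f) (m13 (m13 f) (m23 (m12 φ) (m23 (m13 φ) (m23 (m23 φ) x)))))
      = m12 f (m13 (m12 f) (m23 (m12 φ) (m13 (m13 f) (m23 (m13 φ) (m23 (m23 φ) x))))) := by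
        rw [h14_23]
    _ = m23 (m12 f) (m12 f (m13 (m13 f) (m23 (m13 φ) (m23 (m23 φ) x)))) := by rw [h123V]
    _ = m23 (m12 f) (m23 (m13 f) (m12 f (m23 (m23 φ) x))) := by rw [h124]
    _ = m23 (m12 f) (m23 (m13 f) (m23 (m23 φ) (m12 f x))) := by rw [h12_34φ]
    _ = m23 (m23 f) (m23 (m12 f) (m12 f x)) := by rw [h234]
    _ = m23 (m23 f) (m12 f (m13 (m12 f) (m23 (m12 φ) x))) := by rw [h123M]
    _ = m12 f (m23 (m23 f) (m13 (m12 f) (m23 (m12 φ) x))) := by rw [h12_34f]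
    _ = m12 f (m13 (m12 f) (m13 (m13 f) (m23 (m23 φ) (m23 (m12 φ) x)))) := by rw [h134]

end MPE

/-- If `(F, Φ)` satisfies the modified pentagon equation (with `V ≠ 0`),
then `Φ` satisfies the pentagon equation. -/
theorem stmt6 {V M : Type}
    [AddCommGroup V] [Module k V] [Nontrivial V]
    [AddCommGroup M] [Module k M]
    (F : V ⊗[k] M ≃ₗ[k] V ⊗[k] V) (Φ : M ⊗[k] M ≃ₗ[k] M ⊗[k] M)
    (hFΦ : MPE F.toLinearMap Φ.toLinearMap) :
    PE Φ.toLinearMap := by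
  rw [PE, ← m23_inj (A := V), m23_comp, m23_comp, m23_comp]
  exact hFΦ.pentagon_legs234 F.injective

end
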